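/- Let (A_l)_{l≥0} and (u_l)_{l≥0} be real sequences, and fix j ≥ 0 and n ≥ 1. Suppose f^{(j)}_n(I), f^{(j)}_{n−1}(I), f^{(j+1)}_{n−1}(I), K^{(j)}_n, K^{(j+1)}_n are all nonzero and r^{(j)}_n ≠ r^{(j+1)}_n, and define A^{(j)}_m = f^{(j)}_m(a) / f^{(j)}_m(I) where a is the sequence a_l = A_l and I is the constant sequence 1. Then A^{(j)}_n = (r^{(j)}_n A^{(j+1)}_{n−1} − r^{(j+1)}_n A^{(j)}_{n−1}) / (r^{(j)}_n − r^{(j+1)}_n). -/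

import Mathlib

/-- `hankel u j n` = the Hankel determinant `H^{(j)}_n = det (u_{j+i+k})_{0 ≤ i,k ≤ n-1}`
(with `H^{(j)}_0 = 1`, the determinant of the empty matrix). -/
noncomputable def hankel (u : ℕ → ℝ) (j n : ℕ) : ℝ :=
  Matrix.det (Matrix.of fun i k : Fin n => u (j + i + k))

/-- `Kdet u j n` = the determinant `K^{(j)}_n` of the `n×n` matrix whose first row
is `(1,…,1)` and whose `(i+1)`-th row, for `1 ≤ i ≤ n-1`, is
`(u_{j+i-1}, u_{j+i}, …, u_{j+i+n-2})` (with `K^{(j)}_0 = 1`). -/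
noncomputable def Kdet (u : ℕ → ℝ) (j n : ℕ) : ℝ :=
  Matrix.det (Matrix.of fun i k : Fin n =>
    if (i : ℕ) = 0 then 1 else u (j + ((i : ℕ) - 1) + k))

/-- `rrs u j n = r^{(j)}_n = H^{(j)}_n / K^{(j)}_n`. -/
noncomputable def rrs (u : ℕ → ℝ) (j n : ℕ) : ℝ := hankel u j n / Kdet u j n

/-- `fdet u b j n` = the determinant `f^{(j)}_n(b)`: determinant of the
`(n+1)×(n+1)` matrix whose entry in row `i` and column `k` (`0 ≤ k ≤ n-1`)
is `u (j+i+k)` and whose last column has entries `b (j+i)`. -/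
noncomputable def fdet (u b : ℕ → ℝ) (j n : ℕ) : ℝ :=
  Matrix.det (Matrix.of fun i k : Fin (n + 1) =>
    if (k : ℕ) < n then u (j + i + k) else b (j + i))

/-- `Ajn A u j n = A^{(j)}_n = f^{(j)}_n(a) / f^{(j)}_n(I)`, where `a` is the
sequence `(A_l)` and `I` is the constant sequence `1`. -/
noncomputable def Ajn (A u : ℕ → ℝ) (j n : ℕ) : ℝ :=
  fdet u A j n / fdet u (fun _ => 1) j n


/-!
Everything follows from the Desnanot–Jacobi identity
`det M · det M_inner = det M₀₀ · det Mₗₗ - det M₀ₗ · det Mₗ₀`, proved by Jacobi's argument: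
multiplying `M` by the identity matrix with its first and last columns replaced by those of
`adj M` gives `det M · det (adj-minor) = (det M)² · det M_inner`, and `det M` is cancelled on the
generic matrix. Applied to the matrix of `f^{(j)}_{m+1}(b)` with its `b`-column moved to the front,
whose five minors are Hankel and `f` determinants, it yields the three-term recurrence
`f^{(j)}_{m+1}(b) H^{(j+1)}_m = f^{(j+1)}_m(b) H^{(j)}_{m+1} - H^{(j+1)}_{m+1} f^{(j)}_m(b)`.
For `b = I` the same matrix is the transpose of that of `K^{(j)}_{m+1}`, so
`K^{(j)}_{m+1} = (-1)^m f^{(j)}_m(I)`. Dividing the recurrence for `b = a` by the one for `b = I`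
eliminates `H^{(j+1)}_m` and gives the theorem.
-/

namespace Matrix

variable {R : Type*} [CommRing R]

theorem det_updateCol_single_self {m : ℕ} (B : Matrix (Fin (m + 1)) (Fin (m + 1)) R)
    (j : Fin (m + 1)) :
    (B.updateCol j (Pi.single j 1)).det = (B.submatrix j.succAbove j.succAbove).det := by
  rw [← det_transpose, ← updateRow_transpose, ← adjugate_apply,
    adjugate_fin_succ_eq_det_submatrix, ← two_mul, pow_mul, neg_one_sq, one_pow, one_mul,
    ← transpose_submatrix, det_transpose]

theorem det_one_updateCol_updateCol {n : Type*} [Fintype n] [DecidableEq n] {i j : n}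
    (hij : i ≠ j) (v w : n → R) :
    (((1 : Matrix n n R).updateCol i v).updateCol j w).det = v i * w j - v j * w i := by
  set X := (1 : Matrix n n R).updateCol i v
  have hX : X.det = v i := by
    rw [← cramer_apply, cramer_one]; rfl
  have hi : cramer X w i = w i := by
    rw [cramer_apply, updateCol_idem, ← cramer_apply, cramer_one]; rfl
  have hrow : (X *ᵥ cramer X w) j = v j * cramer X w i + cramer X w j := by
    rw [mulVec, dotProduct, Fintype.sum_eq_add i j hij]
    · simp [X, hij.symm]
    · intro k ⟨hki, hkj⟩
      simp [X, hki, Ne.symm hkj]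
  rw [← cramer_apply, eq_sub_iff_add_eq, ← hi, add_comm, ← hrow, mulVec_cramer, hX]
  simp

theorem det_updateCol_single_zero_last {m : ℕ} (M : Matrix (Fin (m + 2)) (Fin (m + 2)) R) :
    ((M.updateCol 0 (Pi.single 0 1)).updateCol (Fin.last (m + 1))
        (Pi.single (Fin.last (m + 1)) 1)).det =
      (M.submatrix (fun i : Fin m => i.succ.castSucc) (fun i => i.succ.castSucc)).det := by
  rw [det_updateCol_single_self, Fin.succAbove_last]
  have : (M.updateCol 0 (Pi.single 0 1)).submatrix Fin.castSucc Fin.castSucc =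
      (M.submatrix Fin.castSucc Fin.castSucc).updateCol 0 (Pi.single 0 1) := by
    ext i k
    by_cases hk : k = 0 <;> simp [Pi.single_apply, hk]
  rw [this, det_updateCol_single_self, Fin.succAbove_zero, submatrix_submatrix]
  rfl

theorem det_mul_desnanot_jacobi {m : ℕ} (M : Matrix (Fin (m + 2)) (Fin (m + 2)) R) :
    M.det * (M.det *
      (M.submatrix (fun i : Fin m => i.succ.castSucc) (fun i => i.succ.castSucc)).det) =
      M.det * ((M.submatrix Fin.succ Fin.succ).det * (M.submatrix Fin.castSucc Fin.castSucc).det -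
        (M.submatrix Fin.succ Fin.castSucc).det * (M.submatrix Fin.castSucc Fin.succ).det) := by
  have h0L : (0 : Fin (m + 2)) ≠ Fin.last (m + 1) := Fin.last_pos.ne
  have hcol (k : Fin (m + 2)) : M *ᵥ (adjugate M).col k = M.det • Pi.single k 1 := by
    rw [← mulVec_single_one, mulVec_mulVec, mul_adjugate, smul_mulVec, one_mulVec]
  have hprod := det_mul M (((1 : Matrix _ _ R).updateCol 0 ((adjugate M).col 0)).updateCol
    (Fin.last (m + 1)) ((adjugate M).col (Fin.last (m + 1))))
  rw [mul_updateCol, mul_updateCol, mul_one, hcol, hcol, det_one_updateCol_updateCol h0L,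
    det_updateCol_smul, updateCol_comm _ h0L, det_updateCol_smul, updateCol_comm _ h0L.symm,
    det_updateCol_single_zero_last] at hprod
  simp only [col_apply, adjugate_fin_succ_eq_det_submatrix, Fin.succAbove_zero,
    Fin.succAbove_last, Fin.val_zero, Fin.val_last, add_zero, zero_add, pow_zero, one_mul,
    pow_add _ (m + 1)] at hprod
  have hsign : (-1 : R) ^ (m + 1) * (-1) ^ (m + 1) = 1 := by
    rw [← pow_add, ← two_mul, pow_mul, neg_one_sq, one_pow]
  rw [hprod]
  linear_combination M.det * ((M.submatrix Fin.succ Fin.succ).det *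
    (M.submatrix Fin.castSucc Fin.castSucc).det - (M.submatrix Fin.succ Fin.castSucc).det *
      (M.submatrix Fin.castSucc Fin.succ).det) * hsign

theorem desnanot_jacobi {m : ℕ} (M : Matrix (Fin (m + 2)) (Fin (m + 2)) R) :
    M.det * (M.submatrix (fun i : Fin m => i.succ.castSucc) (fun i => i.succ.castSucc)).det =
      (M.submatrix Fin.succ Fin.succ).det * (M.submatrix Fin.castSucc Fin.castSucc).det -
        (M.submatrix Fin.succ Fin.castSucc).det * (M.submatrix Fin.castSucc Fin.succ).det := by
  let X := mvPolynomialX (Fin (m + 2)) (Fin (m + 2)) ℤ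
  have hX := mul_left_cancel₀ (det_mvPolynomialX_ne_zero _ ℤ) (det_mul_desnanot_jacobi X)
  have := congrArg (MvPolynomial.aeval fun p : Fin (m + 2) × Fin (m + 2) => M p.1 p.2) hX
  simp only [map_mul, map_sub, AlgHom.map_det, AlgHom.mapMatrix_apply, ← submatrix_map] at this
  rwa [← AlgHom.mapMatrix_apply, mvPolynomialX_mapMatrix_aeval] at this

end Matrix

noncomputable def borderedHankel (u b : ℕ → ℝ) (j n : ℕ) : Matrix (Fin (n + 1)) (Fin (n + 1)) ℝ :=
  Matrix.of fun i k => if (k : ℕ) = 0 then b (j + i) else u (j + i + (k - 1))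

theorem det_borderedHankel (u b : ℕ → ℝ) (j n : ℕ) :
    (borderedHankel u b j n).det = (-1) ^ n * fdet u b j n := by
  have : borderedHankel u b j n = (Matrix.of fun i k : Fin (n + 1) =>
      if (k : ℕ) < n then u (j + i + k) else b (j + i)).submatrix id
        (Fin.cycleRange (Fin.last n)).symm := by
    ext i k
    cases k using Fin.cases with
    | zero => simp [borderedHankel]
    | succ k =>
      simp only [borderedHankel, Matrix.submatrix_apply, Matrix.of_apply, id,
        Fin.cycleRange_symm_succ, Fin.succAbove_last]
      simp
  rw [this, Matrix.det_permute', Equiv.Perm.sign_symm, Fin.sign_cycleRange, Fin.val_last, fdet]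
  push_cast; ring

theorem Kdet_succ_eq_fdet_one (u : ℕ → ℝ) (j n : ℕ) :
    Kdet u j (n + 1) = (-1) ^ n * fdet u (fun _ => 1) j n := by
  rw [← det_borderedHankel, Kdet, ← Matrix.det_transpose]
  congr 1
  ext i k
  simp only [borderedHankel, Matrix.transpose_apply, Matrix.of_apply]
  split_ifs
  · rfl
  · rw [add_right_comm]

theorem fdet_succ_mul_hankel (u b : ℕ → ℝ) (j m : ℕ) :
    fdet u b j (m + 1) * hankel u (j + 1) m =
      fdet u b (j + 1) m * hankel u j (m + 1) - hankel u (j + 1) (m + 1) * fdet u b j m := by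
  set B := borderedHankel u b j (m + 1)
  have h := Matrix.desnanot_jacobi B
  have hinner : (B.submatrix (fun i : Fin m => i.succ.castSucc) (fun i => i.succ.castSucc)).det =
      hankel u (j + 1) m := by
    rw [hankel]; congr 1; ext i k
    simp [B, borderedHankel, add_assoc, add_left_comm]
  have h00 : (B.submatrix Fin.succ Fin.succ).det = hankel u (j + 1) (m + 1) := by
    rw [hankel]; congr 1; ext i k
    simp [B, borderedHankel, add_assoc, add_left_comm]
  have hLL : (B.submatrix Fin.castSucc Fin.castSucc).det = (-1) ^ m * fdet u b j m := by
    rw [← det_borderedHankel]; rfl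
  have h0L : (B.submatrix Fin.succ Fin.castSucc).det = (-1) ^ m * fdet u b (j + 1) m := by
    rw [← det_borderedHankel]; congr 1; ext i k
    simp [B, borderedHankel, add_assoc, add_comm, add_left_comm]
  have hL0 : (B.submatrix Fin.castSucc Fin.succ).det = hankel u j (m + 1) := by
    rw [hankel]; rfl
  rw [det_borderedHankel, hinner, h00, hLL, h0L, hL0, pow_succ] at h
  refine mul_left_cancel₀ (pow_ne_zero m (neg_ne_zero.2 one_ne_zero) : (-1 : ℝ) ^ m ≠ 0) ?_
  linear_combination -h

theorem stmt_10_general (A u : ℕ → ℝ) (j n : ℕ) (hn : 1 ≤ n)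
    (h1 : fdet u (fun _ => 1) j n ≠ 0)
    (h4 : Kdet u j n ≠ 0) (h5 : Kdet u (j + 1) n ≠ 0)
    (h6 : rrs u j n ≠ rrs u (j + 1) n) :
    Ajn A u j n =
      (rrs u j n * Ajn A u (j + 1) (n - 1) - rrs u (j + 1) n * Ajn A u j (n - 1)) /
        (rrs u j n - rrs u (j + 1) n) := by
  obtain ⟨m, rfl⟩ := Nat.exists_eq_add_of_le' hn
  rw [Nat.add_sub_cancel, eq_div_iff (sub_ne_zero.2 h6)]
  rw [Kdet_succ_eq_fdet_one] at h4 h5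
  have hf := right_ne_zero_of_mul h4
  have hf' := right_ne_zero_of_mul h5
  simp only [rrs, Ajn, Kdet_succ_eq_fdet_one]
  field_simp
  linear_combination fdet u (fun _ => 1) j (m + 1) * fdet_succ_mul_hankel u A j m -
    fdet u A j (m + 1) * fdet_succ_mul_hankel u (fun _ => 1) j m

theorem stmt_10 (A u : ℕ → ℝ) (j n : ℕ) (hn : 1 ≤ n)
    (h1 : fdet u (fun _ => 1) j n ≠ 0) (h2 : fdet u (fun _ => 1) j (n - 1) ≠ 0)
    (h3 : fdet u (fun _ => 1) (j + 1) (n - 1) ≠ 0)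
    (h4 : Kdet u j n ≠ 0) (h5 : Kdet u (j + 1) n ≠ 0)
    (h6 : rrs u j n ≠ rrs u (j + 1) n) :
    Ajn A u j n =
      (rrs u j n * Ajn A u (j + 1) (n - 1) - rrs u (j + 1) n * Ajn A u j (n - 1)) /
        (rrs u j n - rrs u (j + 1) n) :=
  stmt_10_general A u j n hn h1 h4 h5 h6
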